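/- There exists a constant C > 0 such that for every real k ≥ 1, all positive integers m, r with r ≤ m, and all integers α, β with 1 ≤ β ≤ α/2 ≤ r/2, the following holds. If k² ≥ mr, then N(α,β) ≤ 2^{C·r} · (k²r/m)^{r/2}. If k² < mr, then N(α,β) ≤ 2^{C·r} · max{ M(α,β) , (r / ln(emr/k²))^{r} }. -/

import Mathlib

/-!
Writing `N(α,β) = (k²α²/(βm))^β · (kα/m)^(α-2β) · (α-β)^(r-α)`, any `T` bounding the last two
bases, together with `k²α²/(βm) ≤ a T²`, gives `N ≤ a^β T^r`.

If `mr ≤ k²`, take `T = √(k²r/m)` and `a = r/β`, and use `(r/β)^β ≤ e^r`.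
If `k² < mr` then `k < m` (as `r ≤ m`). For `α > 3β` one has `α - β ≤ (α-2β)²`, so `N ≤ M`. For `α ≤ 3β`
take `T = α ≤ 3β` and `a = k²/(βm)`; with `y = e·mr/k²` the bound `(log y)^r ≤ (r/β)^r y^β`
cancels the factor `(k²/m)^β` against `y^β`, leaving `N (log y)^r ≤ e^(4r) r^r`.
-/

open scoped BigOperators
noncomputable section

namespace FH

/-- `M(α,β) = (m/β)^β · (kα/m)^α · (α−2β)^{2r−2α}` (with `0⁰ = 1`). -/
def Mfun (m r : ℕ) (k : ℝ) (α β : ℕ) : ℝ :=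
  ((m:ℝ)/β)^β * (k*α/m)^α * ((α:ℝ) - 2*β)^(2*r - 2*α)

/-- `N(α,β) = (m/β)^β · (kα/m)^α · (α−β)^{r−α}`. -/
def Nfun (m r : ℕ) (k : ℝ) (α β : ℕ) : ℝ :=
  ((m:ℝ)/β)^β * (k*α/m)^α * ((α:ℝ) - β)^(r - α)

open Real

lemma div_pow_le_exp (n : ℕ) {y : ℝ} (hy : 0 ≤ y) : (y / n) ^ n ≤ exp y := by
  have hn : (n : ℝ) * (y / n) ≤ y := by
    rcases eq_or_ne (n : ℝ) 0 with h | h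
    · simpa [h] using hy
    · rw [mul_div_cancel₀ _ h]
  calc (y / n) ^ n ≤ exp (y / n) ^ n := by
        gcongr; linarith [add_one_le_exp (y / n)]
    _ = exp (n * (y / n)) := (exp_nat_mul _ _).symm
    _ ≤ exp y := exp_le_exp.mpr hn

lemma pow_log_le_div_pow_mul_pow (n : ℕ) {b : ℕ} (hb : 0 < b) {y : ℝ} (hy : 1 ≤ y) :
    log y ^ n ≤ ((n : ℝ) / b) ^ n * y ^ b := by
  have hlog : 0 ≤ log y := log_nonneg hy
  have hsplit : log y ^ n = ((n : ℝ) / b) ^ n * (b * log y / n) ^ n := by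
    rcases Nat.eq_zero_or_pos n with rfl | hn
    · simp
    · rw [← mul_pow]; congr 1; field_simp
  calc log y ^ n = ((n : ℝ) / b) ^ n * (b * log y / n) ^ n := hsplit
    _ ≤ ((n : ℝ) / b) ^ n * exp (b * log y) := by
        gcongr; exact div_pow_le_exp n (by positivity)
    _ = ((n : ℝ) / b) ^ n * y ^ b := by rw [exp_nat_mul, exp_log (by linarith)]

lemma Nfun_eq {m r α β : ℕ} (k : ℝ) (h : 2 * β ≤ α) :
    Nfun m r k α β =
      ((m : ℝ) / β * (k * α / m) ^ 2) ^ β * (k * α / m) ^ (α - 2 * β) * ((α : ℝ) - β) ^ (r - α) := by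
  obtain ⟨d, rfl⟩ := Nat.exists_eq_add_of_le h
  rw [Nfun, Nat.add_sub_cancel_left, pow_add, pow_mul]
  ring

lemma Nfun_le_pow_mul_pow {m r α β : ℕ} {k a T : ℝ} (hk : 0 ≤ k) (hβα : 2 * β ≤ α) (hαr : α ≤ r)
    (ha : (m : ℝ) / β * (k * α / m) ^ 2 ≤ a * T ^ 2) (hkT : k * α / m ≤ T)
    (hαT : (α : ℝ) - β ≤ T) :
    Nfun m r k α β ≤ a ^ β * T ^ r := by
  have hβα' : (β : ℝ) ≤ α := by exact_mod_cast (by omega : β ≤ α)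
  have hT : 0 ≤ T := le_trans (by positivity) hkT
  have haT : 0 ≤ a * T ^ 2 := le_trans (by positivity) ha
  rw [Nfun_eq k hβα]
  calc _ ≤ (a * T ^ 2) ^ β * T ^ (α - 2 * β) * T ^ (r - α) := by
        gcongr
    _ = a ^ β * T ^ r := by
        rw [mul_pow, ← pow_mul, mul_assoc, mul_assoc, ← pow_add, ← pow_add]
        congr 2; omega

lemma Nfun_le_of_mul_le_sq {m r α β : ℕ} {k : ℝ} (hk : 0 ≤ k) (hm : 0 < m) (hrm : r ≤ m)
    (hβα : 2 * β ≤ α) (hαr : α ≤ r) (hmr : (m : ℝ) * r ≤ k ^ 2) :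
    Nfun m r k α β ≤ exp r * (k ^ 2 * r / m) ^ ((r : ℝ) / 2) := by
  have hm' : (0 : ℝ) < m := by exact_mod_cast hm
  have hαr' : (α : ℝ) ≤ r := by exact_mod_cast hαr
  have hrm' : (r : ℝ) ≤ m := by exact_mod_cast hrm
  set P := k ^ 2 * r / m with hP_def
  have hP : 0 ≤ P := by positivity
  have hrT : (r : ℝ) ≤ √P := by
    rw [le_sqrt (by positivity) hP, le_div_iff₀ hm']; nlinarith
  have hkT : k * α / m ≤ √P := by
    rw [le_sqrt (by positivity) hP, div_pow, div_le_div_iff₀ (by positivity) hm']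
    have : (α : ℝ) ^ 2 ≤ r * m := by nlinarith
    nlinarith [mul_le_mul_of_nonneg_left this (by positivity : (0 : ℝ) ≤ k ^ 2 * m)]
  have ha : (m : ℝ) / β * (k * α / m) ^ 2 ≤ r / β * √P ^ 2 := by
    rw [sq_sqrt hP]
    calc (m : ℝ) / β * (k * α / m) ^ 2 = k ^ 2 / (β * m) * α ^ 2 := by field_simp
      _ ≤ k ^ 2 / (β * m) * r ^ 2 := by gcongr
      _ = r / β * P := by rw [hP_def]; field_simp
  have hsqrt : √P ^ r = P ^ ((r : ℝ) / 2) := by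
    rw [sqrt_eq_rpow, ← rpow_natCast, ← rpow_mul hP]; ring_nf
  calc Nfun m r k α β ≤ (r / β) ^ β * √P ^ r :=
        Nfun_le_pow_mul_pow hk hβα hαr ha hkT ((sub_le_self _ β.cast_nonneg).trans (hαr'.trans hrT))
    _ ≤ exp r * P ^ ((r : ℝ) / 2) := by
        rw [hsqrt]; gcongr; exact div_pow_le_exp β (by positivity)

lemma Mfun_nonneg {m r α β : ℕ} {k : ℝ} (hk : 0 ≤ k) (h : 2 * β ≤ α) : 0 ≤ Mfun m r k α β := by
  have : (0 : ℝ) ≤ α - 2 * β := by rw [sub_nonneg]; exact_mod_cast h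
  unfold Mfun; positivity

lemma Nfun_le_Mfun {m r α β : ℕ} {k : ℝ} (hk : 0 ≤ k) (h : 3 * β < α) :
    Nfun m r k α β ≤ Mfun m r k α β := by
  have h' : 3 * (β : ℝ) + 1 ≤ α := by exact_mod_cast h
  have hαβ : (α : ℝ) - β ≤ ((α : ℝ) - 2 * β) ^ 2 := by nlinarith
  rw [Nfun, Mfun, ← Nat.mul_sub, pow_mul]
  gcongr
  linarith [(Nat.cast_nonneg β : (0 : ℝ) ≤ β)]

lemma Nfun_le_of_sq_lt_mul {m r α β : ℕ} {k : ℝ} (hk : 0 < k) (hβ : 1 ≤ β) (hβα : 2 * β ≤ α)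
    (hαβ : α ≤ 3 * β) (hαr : α ≤ r) (hrm : r ≤ m) (hmr : k ^ 2 < (m : ℝ) * r) :
    Nfun m r k α β ≤ exp (4 * r) * (r / log (exp 1 * m * r / k ^ 2)) ^ r := by
  have hm : (0 : ℝ) < m := by exact_mod_cast (by omega : 0 < m)
  have hrm' : (r : ℝ) ≤ m := by exact_mod_cast hrm
  have hαβ' : (α : ℝ) ≤ 3 * β := by exact_mod_cast hαβ
  have hkm : k ≤ m := by nlinarith
  set y := exp 1 * m * r / k ^ 2 with hy_def
  have hy : exp 1 ≤ y := by
    rw [hy_def, mul_assoc, mul_div_assoc]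
    exact le_mul_of_one_le_right (exp_pos 1).le ((one_le_div (by positivity)).mpr hmr.le)
  have hL : 0 < log y := by
    linarith [log_exp 1 ▸ log_le_log (exp_pos 1) hy]
  have hN : Nfun m r k α β ≤ (k ^ 2 / (β * m)) ^ β * (3 * β) ^ r := by
    refine (Nfun_le_pow_mul_pow (T := α) hk.le hβα hαr ?_ ?_ ?_).trans (by gcongr)
    · exact le_of_eq (by field_simp)
    · rw [div_le_iff₀ hm, mul_comm]; gcongr
    · linarith
  have hLr : log y ^ r ≤ ((r : ℝ) / β) ^ r * y ^ β :=
    pow_log_le_div_pow_mul_pow r hβ (by linarith [add_one_le_exp 1])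
  rw [div_pow, ← mul_div_assoc, le_div_iff₀ (by positivity)]
  calc Nfun m r k α β * log y ^ r
      ≤ (k ^ 2 / (β * m)) ^ β * (3 * β) ^ r * (((r : ℝ) / β) ^ r * y ^ β) := by gcongr
    _ = (k ^ 2 / (β * m) * y) ^ β * (3 * β * (r / β)) ^ r := by ring
    _ = (exp 1 * (r / β)) ^ β * (3 * r) ^ r := by
        congr 2
        · rw [hy_def]; field_simp
        · field_simp
    _ = exp 1 ^ β * ((r : ℝ) / β) ^ β * 3 ^ r * (r : ℝ) ^ r := by ring
    _ ≤ exp 1 ^ r * exp r * exp 2 ^ r * (r : ℝ) ^ r := by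
        gcongr
        · exact one_le_exp zero_le_one
        · omega
        · exact div_pow_le_exp β (by positivity)
        · linarith [add_one_le_exp 2]
    _ = exp (4 * r) * (r : ℝ) ^ r := by
        rw [exp_one_pow, ← exp_nat_mul, ← exp_add, ← exp_add]; ring_nf

lemma rpow_div_log_mul {b : ℝ} (hb : 0 < b) (hb1 : b ≠ 1) (c x : ℝ) :
    b ^ (c / log b * x) = exp (c * x) := by
  have : log b ≠ 0 := log_ne_zero_of_pos_of_ne_one hb hb1
  rw [rpow_def_of_pos hb]; field_simp

theorem Nfun_bound :
    ∃ C : ℝ, 0 < C ∧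
      ∀ k : ℝ, 1 ≤ k → ∀ m r : ℕ, 0 < m → 0 < r → r ≤ m →
        ∀ α β : ℕ, 1 ≤ β → 2*β ≤ α → α ≤ r →
          (((m:ℝ) * r ≤ k^2 →
            Nfun m r k α β ≤ (2:ℝ)^(C * r) * (k^2 * r / m)^((r:ℝ)/2)) ∧
          (k^2 < (m:ℝ) * r →
            Nfun m r k α β ≤ (2:ℝ)^(C * r) *
              max (Mfun m r k α β)
                (((r:ℝ) / Real.log (Real.exp 1 * m * r / k^2))^r))) := by
  refine ⟨4 / log 2, div_pos four_pos (log_pos one_lt_two), ?_⟩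
  intro k hk m r hm _ hrm α β hβ hβα hαr
  have hk0 : 0 < k := by linarith
  rw [rpow_div_log_mul two_pos (by norm_num)]
  refine ⟨fun hmr ↦ ?_, fun hmr ↦ ?_⟩
  · refine (Nfun_le_of_mul_le_sq hk0.le hm hrm hβα hαr hmr).trans ?_
    gcongr; linarith
  · rcases le_or_gt α (3 * β) with hαβ | hαβ
    · refine (Nfun_le_of_sq_lt_mul hk0 hβ hβα hαβ hαr hrm hmr).trans ?_
      gcongr
      exact le_max_right _ _
    · calc Nfun m r k α β ≤ Mfun m r k α β := Nfun_le_Mfun hk0.le hαβ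
        _ ≤ exp (4 * r) * Mfun m r k α β :=
          le_mul_of_one_le_left (Mfun_nonneg hk0.le hβα) (one_le_exp (by positivity))
        _ ≤ _ := by gcongr; exact le_max_left _ _

end FH
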